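/- Let G be a finite group, N a normal subgroup of G, π a set of primes, and H a Hall π-subgroup of N. If x ∈ H is such that the conjugacy class size |x^G| is a π-number, then x lies in O_π(N), the largest normal π-subgroup of N. -/

import Mathlib

open scoped Classical

/-- `χ : G → ℂ` is an irreducible (complex) character of the monoid `G`. -/
def IsIrrChar (G : Type) [Monoid G] (χ : G → ℂ) : Prop :=
  ∃ V : FDRep ℂ G, CategoryTheory.Simple V ∧ χ = V.character

/-- `x` is a vanishing element of `G`, i.e. some irreducible character of `G` vanishes at `x`. -/
def IsVanishing {G : Type} [Monoid G] (x : G) : Prop :=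
  ∃ χ : G → ℂ, IsIrrChar G χ ∧ χ x = 0

/-- The usual inner product of complex class functions on a finite group. -/
noncomputable def charInner (G : Type) [Group G] [Fintype G] (φ ψ : G → ℂ) : ℂ :=
  (Fintype.card G : ℂ)⁻¹ * ∑ g : G, φ g * (starRingEnd ℂ) (ψ g)

/-- The character of `G` induced from the class function `β` of the subgroup `H`. -/
noncomputable def indChar {G : Type} [Group G] [Fintype G] (H : Subgroup G) (β : H → ℂ) :
    G → ℂ :=
  fun g => (Nat.card H : ℂ)⁻¹ *
    ∑ x : G, if h : x⁻¹ * g * x ∈ H then β ⟨x⁻¹ * g * x, h⟩ else 0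

/-- `x` has order a power of `p`. -/
def IsPElement (p : ℕ) {G : Type*} [Monoid G] (x : G) : Prop :=
  ∃ n : ℕ, orderOf x = p ^ n

/-- `x` has prime power order. -/
def IsPrimePowerOrder {G : Type*} [Monoid G] (x : G) : Prop :=
  ∃ p : ℕ, p.Prime ∧ IsPElement p x

/-- all prime divisors of `n` belong to `π`. -/
def IsPiNumber (π : Set ℕ) (n : ℕ) : Prop :=
  ∀ p : ℕ, p.Prime → p ∣ n → p ∈ π

/-- `H` is a Hall `π`-subgroup: its order is a `π`-number and its index a `π'`-number. -/
def IsHallPiSubgroup (π : Set ℕ) {G : Type*} [Group G] (H : Subgroup G) : Prop :=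
  IsPiNumber π (Nat.card H) ∧ IsPiNumber πᶜ H.index

theorem normal_biSup {G : Type*} [Group G] {S : Set (Subgroup G)}
    (hS : ∀ H ∈ S, H.Normal) : (⨆ H ∈ S, (H : Subgroup G)).Normal := by
  constructor
  intro n hn g
  rw [iSup_subtype'] at hn ⊢
  refine Subgroup.iSup_induction (C := fun y => g * y * g⁻¹ ∈ ⨆ H : S, (H : Subgroup G))
    (fun H : S => (H : Subgroup G)) hn (fun H x hx => ?_) ?_ (fun x y hx hy => ?_)
  · exact le_iSup (fun H : S => (H : Subgroup G)) H ((hS H H.2).conj_mem x hx g)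
  · simpa using Subgroup.one_mem _
  · have h : g * (x * y) * g⁻¹ = g * x * g⁻¹ * (g * y * g⁻¹) := by group
    show g * (x * y) * g⁻¹ ∈ _
    rw [h]; exact Subgroup.mul_mem _ hx hy

/-- `O_π(G)`: the largest normal `π`-subgroup of `G` (the join of all of them). -/
def piCore (π : Set ℕ) (G : Type*) [Group G] : Subgroup G :=
  ⨆ H ∈ {H : Subgroup G | H.Normal ∧ IsPiNumber π (Nat.card H)}, H

instance piCore_normal (π : Set ℕ) (G : Type*) [Group G] : (piCore π G).Normal :=
  normal_biSup fun _ hH => hH.1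

/-- The Fitting subgroup: the join of all nilpotent normal subgroups. -/
def fittingSubgroup (G : Type*) [Group G] : Subgroup G :=
  ⨆ H ∈ {H : Subgroup G | H.Normal ∧ Group.IsNilpotent H}, H

instance fittingSubgroup_normal (G : Type*) [Group G] : (fittingSubgroup G).Normal :=
  normal_biSup fun _ hH => hH.1

/-- `G` is `π`-separable: it has a normal series each of whose factors is a `π`-group
or a `π'`-group. -/
def IsPiSeparable (π : Set ℕ) (G : Type*) [Group G] : Prop :=
  ∃ (n : ℕ) (s : Fin (n + 1) → Subgroup G), Monotone s ∧ s 0 = ⊥ ∧ s (Fin.last n) = ⊤ ∧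
    (∀ i, (s i).Normal) ∧
    ∀ i : Fin n, IsPiNumber π ((s i.castSucc).relIndex (s i.succ)) ∨
      IsPiNumber πᶜ ((s i.castSucc).relIndex (s i.succ))

/-- The subgroup `[x^G, x^G]` generated by all commutators of conjugates of `x`. -/
def conjClassCommutator {G : Type*} [Group G] (x : G) : Subgroup G :=
  Subgroup.closure {c | ∃ a ∈ conjugatesOf x, ∃ b ∈ conjugatesOf x, c = a * b * a⁻¹ * b⁻¹}


/-
The centralizer `C_N(x)` of `x` in `N` has `π`-index, since `|x^N|` divides `|x^G|`; the Hall
subgroup `H` has `π'`-index. Coprimality forces `|N : C_N(x)|` to divide `|H : C_H(x)| = |x^H|`,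
so the `H`-class of `x` already exhausts its `N`-class. Hence every `N`-conjugate of `x` lies in
`H`, i.e. `x` lies in the normal core of `H`, a normal `π`-subgroup of `N`.
-/

namespace IsPiNumber

variable {π : Set ℕ} {m n : ℕ}

theorem of_dvd (hn : IsPiNumber π n) (hmn : m ∣ n) : IsPiNumber π m :=
  fun p hp hpm => hn p hp (hpm.trans hmn)

theorem coprime_of_compl (hm : IsPiNumber π m) (hn : IsPiNumber πᶜ n) : m.Coprime n :=
  Nat.coprime_of_dvd fun p hp hpm hpn => hn p hp hpn (hm p hp hpm)

end IsPiNumber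

theorem le_piCore {π : Set ℕ} {G : Type*} [Group G] (K : Subgroup G) [K.Normal]
    (hK : IsPiNumber π (Nat.card K)) : K ≤ piCore π G :=
  le_iSup₂_of_le K ⟨inferInstance, hK⟩ le_rfl

namespace Subgroup

variable {G : Type*} [Group G]

theorem relIndex_dvd_index_of_normal_right [Finite G] (C N : Subgroup G) [N.Normal] :
    C.relIndex N ∣ C.index := by
  -- compute `|G : C ⊓ N|` through `N` and through `C`; `|C : C ⊓ N|` divides `|G : N|`
  obtain ⟨t, ht⟩ := N.relIndex_dvd_index_of_normal C
  have hC : C.relIndex N * N.index = (C ⊓ N).index := by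
    rw [← inf_relIndex_right, relIndex_mul_index inf_le_right]
  have hN : N.relIndex C * C.index = (C ⊓ N).index := by
    rw [← inf_relIndex_left, relIndex_mul_index inf_le_left]
  have hpos : 0 < N.relIndex C := Nat.pos_of_ne_zero (N.subgroupOf C).index_ne_zero_of_finite
  refine ⟨t, Nat.eq_of_mul_eq_mul_left hpos ?_⟩
  rw [hN, ← hC, ht]
  ring

theorem index_dvd_relIndex_of_coprime {C H : Subgroup G} (hCH : C.index.Coprime H.index) :
    C.index ∣ C.relIndex H := by
  refine hCH.dvd_of_dvd_mul_right ?_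
  rw [← inf_relIndex_right, relIndex_mul_index inf_le_right]
  exact index_dvd_of_le inf_le_left

theorem centralizer_subgroupOf (K : Subgroup G) (y : K) :
    (centralizer {(y : G)}).subgroupOf K = centralizer {y} := by
  ext k
  simp only [mem_subgroupOf, mem_centralizer_singleton_iff, ← Subtype.coe_inj, coe_mul]

end Subgroup

open Subgroup

section ConjugacyClass

variable {G : Type*} [Group G]

theorem card_conjugatesOf_eq_index (y : G) :
    Nat.card (conjugatesOf y) = (centralizer {y}).index := by
  have horbit : MulAction.orbit (ConjAct G) y = conjugatesOf y := by
    ext b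
    exact ConjAct.mem_orbit_conjAct.trans isConj_comm
  rw [← horbit, Nat.card_coe_set_eq, ← MulAction.index_stabilizer,
    centralizer_eq_comap_stabilizer]
  exact (index_comap_of_surjective (f := ConjAct.toConjAct.toMonoidHom) _
    ConjAct.toConjAct.surjective).symm

theorem card_conjugatesOf_eq_relIndex (K : Subgroup G) (y : K) :
    Nat.card (conjugatesOf y) = (centralizer {(y : G)}).relIndex K := by
  rw [card_conjugatesOf_eq_index, ← centralizer_subgroupOf]
  rfl

theorem card_conjugatesOf_dvd_of_normal [Finite G] (N : Subgroup G) [N.Normal] (y : N) :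
    Nat.card (conjugatesOf y) ∣ Nat.card (conjugatesOf (y : G)) := by
  rw [card_conjugatesOf_eq_relIndex, card_conjugatesOf_eq_index]
  exact relIndex_dvd_index_of_normal_right _ N

theorem mem_normalCore_of_coprime_index [Finite G] {H : Subgroup G} {x : G} (hx : x ∈ H)
    (hcop : (centralizer {x}).index.Coprime H.index) : x ∈ H.normalCore := by
  set y : H := ⟨x, hx⟩
  set S : Set G := (↑) '' (conjugatesOf y : Set H)
  have hS : S ⊆ conjugatesOf x := by
    rintro _ ⟨z, hz, rfl⟩
    exact H.subtype.map_isConj hz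
  have hcard : (conjugatesOf x).ncard ≤ S.ncard := by
    calc (conjugatesOf x).ncard = (centralizer {x}).index := by
          rw [← Nat.card_coe_set_eq, card_conjugatesOf_eq_index]
      _ ≤ (centralizer {x}).relIndex H :=
          Nat.le_of_dvd (Nat.pos_of_ne_zero index_ne_zero_of_finite)
            (index_dvd_relIndex_of_coprime hcop)
      _ = S.ncard := by
          rw [← card_conjugatesOf_eq_relIndex H y, Set.ncard_image_of_injective _
            Subtype.val_injective, Nat.card_coe_set_eq]
  have hSeq : S = conjugatesOf x := Set.eq_of_subset_of_ncard_le hS hcard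
  intro g
  have hconj : g * x * g⁻¹ ∈ S := hSeq ▸ isConj_iff.2 ⟨g, rfl⟩
  obtain ⟨z, -, hz⟩ := hconj
  exact hz ▸ z.2

end ConjugacyClass

/-- If `H` is a Hall `π`-subgroup of the normal subgroup `N` and `x ∈ H` has `G`-class size
a `π`-number, then `x ∈ O_π(N)`. -/
theorem mem_piCore_of_conjClass_piNumber
    {G : Type*} [Group G] [Finite G] (N : Subgroup G) (hN : N.Normal)
    (π : Set ℕ) (H : Subgroup N) (hH : IsHallPiSubgroup π H)
    (x : N) (hx : x ∈ H)
    (hclass : IsPiNumber π (Nat.card (conjugatesOf (x : G)))) :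
    x ∈ piCore π N := by
  have hcentralizer : IsPiNumber π (centralizer {x}).index := by
    rw [← card_conjugatesOf_eq_index]
    exact hclass.of_dvd (card_conjugatesOf_dvd_of_normal N x)
  have hcore : IsPiNumber π (Nat.card H.normalCore) :=
    hH.1.of_dvd (card_dvd_of_le H.normalCore_le)
  exact le_piCore _ hcore
    (mem_normalCore_of_coprime_index hx (hcentralizer.coprime_of_compl hH.2))
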